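/- Let q ≥ 9 be odd and let V be an (n+1)-dimensional vector space over F_q, n+1 ≥ 5, with a nondegenerate symmetric bilinear form f of plus type. In the graph whose vertices are the nondegenerate 1-dimensional subspaces of V (of both types) and whose edges are pairs spanning an elliptic 2-dimensional subspace, every cycle of length 5 can be decomposed into cycles of length at most 4: given a 5-cycle a, b, c, d, e, there exists a vertex p on an elliptic line meeting the elliptic line cd such that a is adjacent to p, splitting the pentagon into two quadrangles. -/

import Mathlib

open Module

/-- Plus type convention for a nondegenerate symmetric bilinear form over a finite
field of odd order, via the discriminant (Gram determinant modulo squares). -/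
def BIsPlusType {F M : Type*} [Field F] [AddCommGroup M] [Module F M]
    (B : LinearMap.BilinForm F M) : Prop :=
  ∃ (d : ℕ) (b : Basis (Fin d) F M),
    if Even d then IsSquare ((-1 : F) ^ (d / 2) * (Matrix.of fun i j => B (b i) (b j)).det)
    else (IsSquare ((-1 : F) ^ (d / 2) * (Matrix.of fun i j => B (b i) (b j)).det) ↔
      IsSquare (-1 : F))

/-- A subspace `W` is an *elliptic line* for `B` if it is 2-dimensional,
nondegenerate and anisotropic. -/
def IsEllipticLine {F V : Type*} [Field F] [AddCommGroup V] [Module F V]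
    (B : LinearMap.BilinForm F V) (W : Submodule F V) : Prop :=
  finrank F W = 2 ∧ (B.restrict W).Nondegenerate ∧ ∀ v ∈ W, B v v = 0 → v = 0

/-- Adjacency in the elliptic collinearity graph: two nondegenerate vectors span an
elliptic line. -/
def EAdj {F V : Type*} [Field F] [AddCommGroup V] [Module F V]
    (B : LinearMap.BilinForm F V) (u v : V) : Prop :=
  IsEllipticLine B (Submodule.span F {u, v})

/-!
Write `p = c + t • d` and `Q x = B x x`. The line `span {a, p}` is elliptic exactly when
`B a p ^ 2 - Q a * Q p` is a nonsquare, and as a function of `t` this is a quadratic whose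
discriminant is `-4 Q a` times the Gram determinant of `a, c, d`.

If that determinant is nonzero, the character sum `∑ₜ χ (α t² + β t + γ) = -χ α` (`0` when
`α = 0`), together with the at most two roots of the quadratic, forces nonsquare values at two or
more values of `t` once `q > 5`, hence at some `t ≠ 0`.
If it vanishes, a kernel vector of the Gram matrix writes `a = p₀ + r` with `p₀` on the line
`cd` and `r` isotropic and orthogonal to `a` and to `cd`; then `a` and `p₀` have the same
discriminant against every point of `cd`, and that is a nonsquare off `⟨p₀⟩` since `cd` is
elliptic.
-/

open Finset Submodule

section QuadraticValues

variable {F : Type*} [Field F] [Fintype F] [DecidableEq F]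

lemma card_sq_sub_sq_eq (h2 : (2 : F) ≠ 0) {k : F} (hk : k ≠ 0) :
    #{p : F × F | p.1 ^ 2 - p.2 ^ 2 = k} = Fintype.card F - 1 := by
  have hsum : ∀ p : F × F, p.1 ^ 2 - p.2 ^ 2 = k → p.1 + p.2 ≠ 0 := fun p hp h0 =>
    hk (by rw [← hp]; linear_combination (p.1 - p.2) * h0)
  rw [← card_univ, ← card_erase_of_mem (mem_univ (0 : F))]
  refine card_nbij' (fun p => p.1 + p.2) (fun α => ((α + k / α) / 2, (α - k / α) / 2))
    ?_ ?_ ?_ ?_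
  all_goals intro x hx
  all_goals simp only [coe_filter, coe_erase, coe_univ, mem_univ, true_and, Set.mem_ofPred_eq,
      Set.mem_sdiff, Set.mem_univ, Set.mem_singleton_iff] at hx ⊢
  · exact hsum x hx
  · field_simp; ring
  · have hx0 := hsum x hx
    ext
    · field_simp; linear_combination -hx
    · field_simp; linear_combination hx
  · field_simp; ring

lemma sum_quadraticChar_sq_sub (hF : ringChar F ≠ 2) {k : F} (hk : k ≠ 0) :
    ∑ s : F, quadraticChar F (s ^ 2 - k) = -1 := by
  -- both sides count the points of the hyperbola `s ^ 2 - y ^ 2 = k`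
  have hfiber : ∀ s : F, quadraticChar F (s ^ 2 - k) + 1 = #{y : F | s ^ 2 - y ^ 2 = k} := by
    intro s
    rw [← quadraticChar_card_sqrts hF, Set.toFinset_ofPred]
    congr 3 with y
    constructor <;> intro h <;> linear_combination -h
  have hcount : ∑ s : F, (quadraticChar F (s ^ 2 - k) + 1) = Fintype.card F - 1 := by
    simp_rw [hfiber]
    rw [← Nat.cast_one, ← Nat.cast_sub Fintype.card_pos,
      ← card_sq_sub_sq_eq (Ring.two_ne_zero hF) hk, card_filter, Fintype.sum_prod_type]
    simp_rw [card_filter]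
    norm_cast
  rw [sum_add_distrib] at hcount
  simp only [sum_const, card_univ, nsmul_eq_mul, mul_one] at hcount
  linarith

lemma sum_quadraticChar_quadratic_le_one (hF : ringChar F ≠ 2) {a b c : F}
    (hd : discrim a b c ≠ 0) : ∑ x : F, quadraticChar F (a * (x * x) + b * x + c) ≤ 1 := by
  have h2 : (2 : F) ≠ 0 := Ring.two_ne_zero hF
  by_cases ha : a = 0
  · have hb : b ≠ 0 := by rintro rfl; simp [discrim, ha] at hd
    have hbij : Function.Bijective fun x : F => b * x + c :=
      ((Equiv.mulLeft₀ b hb).trans (Equiv.addRight c)).bijective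
    simp only [ha, zero_mul, zero_add]
    rw [hbij.sum_comp (fun y => quadraticChar F y), quadraticChar_sum_zero hF]
    norm_num
  · have hbij : Function.Bijective fun x : F => 2 * a * x + b :=
      ((Equiv.mulLeft₀ (2 * a) (mul_ne_zero h2 ha)).trans (Equiv.addRight b)).bijective
    have hsq : ∀ x : F, quadraticChar F a * quadraticChar F (a * (x * x) + b * x + c)
        = quadraticChar F ((2 * a * x + b) ^ 2 - discrim a b c) := by
      intro x
      rw [show (2 * a * x + b) ^ 2 - discrim a b c
        = 2 ^ 2 * (a * (a * (x * x) + b * x + c)) by rw [discrim]; ring, map_mul,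
        quadraticChar_sq_one' h2, one_mul, map_mul]
    have hsum : quadraticChar F a * ∑ x : F, quadraticChar F (a * (x * x) + b * x + c) = -1 := by
      rw [mul_sum]
      simp_rw [hsq]
      exact (hbij.sum_comp fun s => quadraticChar F (s ^ 2 - discrim a b c)).trans
        (sum_quadraticChar_sq_sub hF hd)
    rcases quadraticChar_dichotomy ha with h | h <;> rw [h] at hsum <;> linarith

lemma card_quadratic_eq_zero_le_two {a b c : F} (hd : discrim a b c ≠ 0) :
    #{x : F | a * (x * x) + b * x + c = 0} ≤ 2 := by
  open Polynomial in
  set p : F[X] := C a * X ^ 2 + C b * X + C c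
  have hp : p ≠ 0 := by
    intro h
    have ha : a = 0 := by simpa [p] using congrArg (coeff · 2) h
    have hb : b = 0 := by simpa [p] using congrArg (coeff · 1) h
    simp [discrim, ha, hb] at hd
  refine (card_le_degree_of_subset_roots (p := p) fun x hx => ?_).trans natDegree_quadratic_le
  simp only [mem_val, mem_filter, mem_univ, true_and] at hx
  rw [mem_roots hp, IsRoot, eval_add, eval_add, eval_mul, eval_mul, eval_C, eval_C, eval_C,
    eval_pow, eval_X, ← hx]
  ring

lemma exists_ne_not_isSquare_quadratic (hF : ringChar F ≠ 2) (hq : 5 < Fintype.card F)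
    {a b c : F} (hd : discrim a b c ≠ 0) (x₀ : F) :
    ∃ x ≠ x₀, ¬ IsSquare (a * (x * x) + b * x + c) := by
  by_contra! hsq
  set f : F → F := fun x => a * (x * x) + b * x + c
  -- otherwise the character sum is at least `q - 2 - #zeros ≥ q - 4 > 1`
  have hpoint : ∀ x : F, 1 - (if x = x₀ then 2 else 0) - (if f x = 0 then 1 else 0)
      ≤ quadraticChar F (f x) := by
    intro x
    by_cases hx : x = x₀
    · rw [if_pos hx]
      rcases quadraticChar_isQuadratic F (f x) with h | h | h <;> rw [h] <;> split_ifs <;> norm_num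
    · by_cases h0 : f x = 0
      · simp [hx, h0]
      · simp [hx, h0, quadraticChar_one_iff_isSquare h0 |>.mpr (hsq x hx)]
  have hlow := sum_le_sum fun x (_ : x ∈ univ) => hpoint x
  rw [sum_sub_distrib, sum_sub_distrib, sum_ite_eq', sum_boole] at hlow
  simp only [sum_const, card_univ, mem_univ, if_true, nsmul_eq_mul, mul_one] at hlow
  have hup := sum_quadraticChar_quadratic_le_one hF hd
  have hzeros : (#{x : F | f x = 0} : ℤ) ≤ 2 := by exact_mod_cast card_quadratic_eq_zero_le_two hd
  have : (5 : ℤ) < Fintype.card F := by exact_mod_cast hq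
  linarith

end QuadraticValues

section Geometry

variable {F V : Type*} [Field F] [AddCommGroup V] [Module F V]

lemma linearIndependent_pair_of_finrank_span_eq_two {x y : V}
    (h : finrank F (span F {x, y}) = 2) : LinearIndependent F ![x, y] := by
  rw [linearIndependent_iff_card_eq_finrank_span, Set.finrank, Matrix.range_cons_cons_empty, h,
    Fintype.card_fin]

lemma finrank_span_pair_eq_two {x y : V} (h : LinearIndependent F ![x, y]) :
    finrank F (span F {x, y}) = 2 := by
  rw [← Matrix.range_cons_cons_empty x y ![], finrank_span_eq_card h, Fintype.card_fin]

lemma span_pair_eq_of_finrank_eq_two {L : Submodule F V} (hL : finrank F L = 2) {x y : V}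
    (hx : x ∈ L) (hy : y ∈ L) (hxy : LinearIndependent F ![x, y]) : span F {x, y} = L := by
  have : FiniteDimensional F L := Module.finite_of_finrank_pos (by omega)
  refine eq_of_le_of_finrank_eq (span_le.mpr ?_) (by rw [finrank_span_pair_eq_two hxy, hL])
  rintro z (rfl | rfl) <;> assumption

lemma exists_linearIndependent_pair_add_smul (h2 : (2 : F) ≠ 0) {c d p : V}
    (hcd : LinearIndependent F ![c, d]) (hp : p ∈ span F {c, d}) (hp0 : p ≠ 0) :
    ∃ t : F, t ≠ 0 ∧ LinearIndependent F ![p, c + t • d] := by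
  obtain ⟨α, β, rfl⟩ := mem_span_pair.mp hp
  have key : ∀ t : F, LinearIndependent F ![α • c + β • d, c + t • d] ↔ α * t ≠ β := by
    intro t
    simpa [hcd] using
      LinearIndependent.pair_add_smul_add_smul_iff (R := F) (x := c) (y := d) α β 1 t
  by_cases h1 : α * 1 = β
  · refine ⟨-1, neg_ne_zero.mpr one_ne_zero, (key (-1)).mpr fun h => hp0 ?_⟩
    have hα : α = 0 := by
      have : 2 * α = 0 := by linear_combination h1 - h
      exact (mul_eq_zero.mp this).resolve_left h2
    simp [hα, ← h1]
  · exact ⟨1, one_ne_zero, (key 1).mpr h1⟩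

variable {B : LinearMap.BilinForm F V}

variable (B) in
def gramMatrix {ι : Type*} (v : ι → V) : Matrix ι ι F :=
  Matrix.of fun i j => B (v i) (v j)

variable (B) in
/-- Minus the Gram determinant of `x, y`. -/
def spanDiscrim (x y : V) : F :=
  B x y ^ 2 - B x x * B y y

lemma nondegenerate_restrict_of_anisotropic {W : Submodule F V}
    (h : ∀ v ∈ W, B v v = 0 → v = 0) : (B.restrict W).Nondegenerate :=
  ⟨fun v hv => Subtype.ext (h v v.2 (hv v)), fun v hv => Subtype.ext (h v v.2 (hv v))⟩

lemma apply_self_mul_apply_smul_add_smul (hB : B.IsSymm) (s t : F) (x y : V) :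
    B x x * B (s • x + t • y) (s • x + t • y)
      = (s * B x x + t * B x y) ^ 2 - t ^ 2 * spanDiscrim B x y := by
  have hyx : B y x = B x y := hB.eq y x
  simp only [spanDiscrim, map_add, map_smul, LinearMap.add_apply, LinearMap.smul_apply,
    smul_eq_mul, hyx]
  ring

lemma eq_zero_of_not_isSquare_spanDiscrim (hB : B.IsSymm) {x y : V} (hx : B x x ≠ 0)
    (hD : ¬ IsSquare (spanDiscrim B x y)) {s t : F}
    (h : B (s • x + t • y) (s • x + t • y) = 0) : s = 0 ∧ t = 0 := by
  have key := apply_self_mul_apply_smul_add_smul hB s t x y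
  rw [h, mul_zero] at key
  by_cases ht : t = 0
  · subst ht
    simpa [hx] using key.symm
  · exact absurd ⟨(s * B x x + t * B x y) / t, by field_simp; linear_combination key⟩ hD

lemma isEllipticLine_span_pair (hB : B.IsSymm) {x y : V} (hx : B x x ≠ 0)
    (hD : ¬ IsSquare (spanDiscrim B x y)) : IsEllipticLine B (span F {x, y}) := by
  have hanis : ∀ v ∈ span F {x, y}, B v v = 0 → v = 0 := by
    intro v hv h0
    obtain ⟨s, t, rfl⟩ := mem_span_pair.mp hv
    obtain ⟨rfl, rfl⟩ := eq_zero_of_not_isSquare_spanDiscrim hB hx hD h0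
    simp
  have hxy : LinearIndependent F ![x, y] := LinearIndependent.pair_iff.mpr fun s t h =>
    eq_zero_of_not_isSquare_spanDiscrim hB hx hD (by simp [h])
  exact ⟨finrank_span_pair_eq_two hxy, nondegenerate_restrict_of_anisotropic hanis, hanis⟩

lemma IsEllipticLine.span_pair {L : Submodule F V} (hL : IsEllipticLine B L) {x y : V}
    (hx : x ∈ L) (hy : y ∈ L) (hxy : LinearIndependent F ![x, y]) :
    IsEllipticLine B (span F {x, y}) := by
  rwa [span_pair_eq_of_finrank_eq_two hL.1 hx hy hxy]

lemma IsEllipticLine.not_isSquare_spanDiscrim (hB : B.IsSymm) {L : Submodule F V}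
    (hL : IsEllipticLine B L) {x y : V} (hx : x ∈ L) (hy : y ∈ L)
    (hxy : LinearIndependent F ![x, y]) : ¬ IsSquare (spanDiscrim B x y) := by
  rintro ⟨m, hm⟩
  have hQx : B x x ≠ 0 := fun h => hxy.ne_zero 0 (hL.2.2 x hx h)
  set s := (m - B x y) / B x x
  have key := apply_self_mul_apply_smul_add_smul hB s 1 x y
  have hs : s * B x x + 1 * B x y = m := by simp only [s]; field_simp; ring
  rw [hs, hm, one_pow, one_mul, ← sq, sub_self] at key
  have hz := hL.2.2 _ (add_mem (smul_mem _ s hx) (smul_mem _ 1 hy))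
    ((mul_eq_zero.mp key).resolve_left hQx)
  exact one_ne_zero (LinearIndependent.pair_iff.mp hxy s 1 hz).2

lemma exists_ne_zero_sum_smul_orthogonal_of_det_eq_zero {ι : Type*} [Fintype ι]
    [DecidableEq ι] (v : ι → V) (h : (gramMatrix B v).det = 0) :
    ∃ ρ : ι → F, ρ ≠ 0 ∧ ∀ j, B (∑ i, ρ i • v i) (v j) = 0 := by
  obtain ⟨ρ, hρ, hker⟩ := Matrix.exists_vecMul_eq_zero_iff.mpr h
  refine ⟨ρ, hρ, fun j => ?_⟩
  simpa [gramMatrix, Matrix.vecMul, dotProduct, map_sum] using congrFun hker j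

lemma spanDiscrim_add_smul (hB : B.IsSymm) (a c d : V) (t : F) :
    spanDiscrim B a (c + t • d) = spanDiscrim B a d * (t * t)
      + 2 * (B a c * B a d - B a a * B c d) * t + spanDiscrim B a c := by
  have hdc : B d c = B c d := hB.eq d c
  simp only [spanDiscrim, map_add, map_smul, LinearMap.add_apply, LinearMap.smul_apply,
    smul_eq_mul, hdc]
  ring

lemma discrim_spanDiscrim_eq_det (hB : B.IsSymm) (a c d : V) :
    discrim (spanDiscrim B a d) (2 * (B a c * B a d - B a a * B c d)) (spanDiscrim B a c)
      = -4 * B a a * (gramMatrix B ![a, c, d]).det := by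
  have hca : B c a = B a c := hB.eq c a
  have hda : B d a = B a d := hB.eq d a
  have hdc : B d c = B c d := hB.eq d c
  simp only [discrim, spanDiscrim, gramMatrix, Matrix.det_fin_three, Matrix.of_apply,
    Matrix.cons_val_zero, Matrix.cons_val_one, Matrix.cons_val_two, Matrix.head_cons,
    Matrix.tail_cons, hca, hda, hdc]
  ring

lemma spanDiscrim_add_of_orthogonal {L : Submodule F V} {p r : V} (hp : p ∈ L)
    (hrL : ∀ y ∈ L, B r y = 0) (hr : B (p + r) r = 0) {x : V} (hx : x ∈ L) :
    spanDiscrim B (p + r) x = spanDiscrim B p x := by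
  have hx' : B (p + r) x = B p x := by rw [LinearMap.BilinForm.add_left, hrL x hx, add_zero]
  have hp' : B (p + r) (p + r) = B p p := by
    rw [LinearMap.BilinForm.add_right, hr, add_zero, LinearMap.BilinForm.add_left, hrL p hp,
      add_zero]
  rw [spanDiscrim, spanDiscrim, hx', hp']

lemma exists_spanDiscrim_eq_of_det_eq_zero (hB : B.IsSymm) {a c d : V}
    (hcd : IsEllipticLine B (span F {c, d})) (ha : B a a ≠ 0)
    (hG : (gramMatrix B ![a, c, d]).det = 0) :
    ∃ p ∈ span F {c, d}, p ≠ 0 ∧ ∀ x ∈ span F {c, d}, spanDiscrim B a x = spanDiscrim B p x := by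
  obtain ⟨ρ, hρ, hr⟩ := exists_ne_zero_sum_smul_orthogonal_of_det_eq_zero _ hG
  set r := ∑ i, ρ i • ![a, c, d] i with hr_def
  simp only [Fin.sum_univ_three, Matrix.cons_val_zero, Matrix.cons_val_one,
    Matrix.cons_val_two, Matrix.head_cons, Matrix.tail_cons] at hr_def
  have hrL : ∀ x ∈ span F {c, d}, B r x = 0 := by
    intro x hx
    obtain ⟨s, t, rfl⟩ := mem_span_pair.mp hx
    have hrc : B r c = 0 := hr 1
    have hrd : B r d = 0 := hr 2
    simp [hrc, hrd]
  set l := ρ 1 • c + ρ 2 • d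
  have hlL : l ∈ span F {c, d} :=
    add_mem (smul_mem _ _ (subset_span (by simp))) (smul_mem _ _ (subset_span (by simp)))
  -- if `ρ 0 = 0` then `r = l` is an isotropic vector of the anisotropic line `cd`
  have hρ0 : ρ 0 ≠ 0 := by
    intro h0
    have hrl : r = l := by rw [hr_def, h0, zero_smul, zero_add]
    have hl0 : l = 0 := hcd.2.2 l hlL (hrl ▸ hrL l hlL)
    obtain ⟨h1, h2⟩ := LinearIndependent.pair_iff.mp
      (linearIndependent_pair_of_finrank_span_eq_two hcd.1) _ _ hl0
    exact hρ (funext fun i => by fin_cases i <;> assumption)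
  set p := -(ρ 0)⁻¹ • l
  have hpL : p ∈ span F {c, d} := smul_mem _ _ hlL
  have hap : a = p + (ρ 0)⁻¹ • r := by
    simp only [p, hr_def]
    match_scalars <;> field_simp <;> ring
  clear_value p
  have har : B a r = 0 := (hB.eq a r).trans (hr 0)
  refine ⟨p, hpL, fun h0 => ha ?_, fun x hx => ?_⟩
  · nth_rewrite 2 [hap]
    rw [h0, zero_add, LinearMap.BilinForm.smul_right, har, mul_zero]
  · rw [hap] at har ⊢
    refine spanDiscrim_add_of_orthogonal hpL (fun y hy => ?_) ?_ hx
    · rw [LinearMap.BilinForm.smul_left, hrL y hy, mul_zero]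
    · rw [LinearMap.BilinForm.smul_right, har, mul_zero]

lemma exists_not_isSquare_spanDiscrim_add_smul [Fintype F] (hF : ringChar F ≠ 2)
    (hq : 5 < Fintype.card F) (hB : B.IsSymm) {a c d : V}
    (hcd : IsEllipticLine B (span F {c, d})) (ha : B a a ≠ 0) :
    ∃ t : F, t ≠ 0 ∧ ¬ IsSquare (spanDiscrim B a (c + t • d)) := by
  classical
  have h2 : (2 : F) ≠ 0 := Ring.two_ne_zero hF
  have hmem : ∀ t : F, c + t • d ∈ span F {c, d} := fun t =>
    add_mem (subset_span (by simp)) (smul_mem _ t (subset_span (by simp)))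
  by_cases hG : (gramMatrix B ![a, c, d]).det = 0
  · obtain ⟨p, hpL, hp0, hp⟩ := exists_spanDiscrim_eq_of_det_eq_zero hB hcd ha hG
    obtain ⟨t, ht, hind⟩ := exists_linearIndependent_pair_add_smul h2
      (linearIndependent_pair_of_finrank_span_eq_two hcd.1) hpL hp0
    refine ⟨t, ht, ?_⟩
    rw [hp _ (hmem t)]
    exact hcd.not_isSquare_spanDiscrim hB hpL (hmem t) hind
  · have h4 : (-4 : F) ≠ 0 := by
      rw [show (-4 : F) = -(2 * 2) by norm_num]
      exact neg_ne_zero.mpr (mul_ne_zero h2 h2)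
    have hd : discrim (spanDiscrim B a d) (2 * (B a c * B a d - B a a * B c d))
        (spanDiscrim B a c) ≠ 0 := by
      rw [discrim_spanDiscrim_eq_det hB]
      exact mul_ne_zero (mul_ne_zero h4 ha) hG
    obtain ⟨t, ht, hns⟩ := exists_ne_not_isSquare_quadratic hF hq hd 0
    exact ⟨t, ht, by rwa [spanDiscrim_add_smul hB]⟩

end Geometry

theorem pentagon_decomposes_into_quadrangles_general
    {F V : Type*} [Field F] [Fintype F] [AddCommGroup V] [Module F V]
    (q : ℕ) (hq : Fintype.card F = q) (hodd : Odd q) (hq9 : 9 ≤ q)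
    (B : LinearMap.BilinForm F V) (hsymm : B.IsSymm)
    (a c d : V)
    (ha : B a a ≠ 0)
    (hcd : EAdj B c d) :
    ∃ p : V, B p p ≠ 0 ∧ p ∈ Submodule.span F {c, d} ∧
      EAdj B a p ∧ EAdj B p c ∧ EAdj B p d := by
  have hF : ringChar F ≠ 2 := by
    rw [Ne, FiniteField.even_card_iff_char_two, hq, ← Nat.even_iff, Nat.not_even_iff_odd]
    exact hodd
  obtain ⟨t, ht, hD⟩ := exists_not_isSquare_spanDiscrim_add_smul hF (by omega) hsymm hcd ha
  have hcd' := linearIndependent_pair_of_finrank_span_eq_two hcd.1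
  have hcL : c ∈ span F {c, d} := subset_span (by simp)
  have hdL : d ∈ span F {c, d} := subset_span (by simp)
  have hpL : c + t • d ∈ span F {c, d} := add_mem hcL (smul_mem _ t hdL)
  refine ⟨c + t • d, fun h0 => ?_, hpL, isEllipticLine_span_pair hsymm ha hD,
    hcd.span_pair hpL hcL ?_, hcd.span_pair hpL hdL ?_⟩
  · exact one_ne_zero
      (LinearIndependent.pair_iff.mp hcd' 1 t (by rw [one_smul]; exact hcd.2.2 _ hpL h0)).1
  · simpa [hcd', eq_comm, ht] using
      LinearIndependent.pair_add_smul_add_smul_iff (R := F) (x := c) (y := d) 1 t 1 0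
  · simp [hcd']

/-- Let `q ≥ 9` be odd and `V` an `(n+1)`-dimensional space over `F_q`, `n+1 ≥ 5`,
with a nondegenerate symmetric bilinear form of plus type.  In the graph on
nondegenerate points with adjacency "spanning an elliptic line", every pentagon
decomposes into two quadrangles: given a 5-cycle `a, b, c, d, e`, there is a vertex
`p` on the elliptic line `cd` adjacent to `a` (and to `c` and to `d`). -/
theorem pentagon_decomposes_into_quadrangles
    {F V : Type*} [Field F] [Fintype F] [AddCommGroup V] [Module F V]
    (q : ℕ) (hq : Fintype.card F = q) (hodd : Odd q) (hq9 : 9 ≤ q)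
    (n : ℕ) (hn : 5 ≤ n + 1) (hdim : finrank F V = n + 1)
    (B : LinearMap.BilinForm F V) (hsymm : B.IsSymm) (hB : B.Nondegenerate)
    (hplus : BIsPlusType B)
    (a b c d e : V)
    (ha : B a a ≠ 0) (hb : B b b ≠ 0) (hc : B c c ≠ 0) (hd : B d d ≠ 0)
    (he : B e e ≠ 0)
    (hab : EAdj B a b) (hbc : EAdj B b c) (hcd : EAdj B c d)
    (hde : EAdj B d e) (hea : EAdj B e a) :
    ∃ p : V, B p p ≠ 0 ∧ p ∈ Submodule.span F {c, d} ∧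
      EAdj B a p ∧ EAdj B p c ∧ EAdj B p d :=
  pentagon_decomposes_into_quadrangles_general q hq hodd hq9 B hsymm a c d ha hcd
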